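/- Let G be a finite connected simple graph with at least 5 vertices. Then there exist a proper coloring c of G and an up-color dominating c-set D of G with weight Σ_{v∈D} c(v) at most χ(G) − 1 if and only if G has a vertex whose closed neighborhood is the whole vertex set of G (i.e., G is a cone graph). -/

import Mathlib

/-!
If `D` up-color dominates a proper coloring `c`, every color is at most the largest color `m` on
`D`, so `c` uses at most `m + 1` colors and `χ(G) - 1 ≤ m ≤ ∑_{d ∈ D} c d`. Equality forces `D` to
be a single vertex of color `m`, which then dominates every other vertex. Conversely, a vertex
adjacent to all others is the only vertex of its color in a `χ(G)`-coloring; swapping its color with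
the top color `χ(G) - 1` makes `{v}` an up-color dominating set of weight `χ(G) - 1`.
-/

/-- `D` is an up-color dominating `c`-set of `G`. -/
def IsUCDomSet {V : Type*} (G : SimpleGraph V) (c : V → ℕ) (D : Finset V) : Prop :=
  (∀ v ∉ D, ∃ d ∈ D, G.Adj v d ∧ c v < c d) ∧ ∀ d ∈ D, 1 ≤ c d

/-- The chromatic number of `G` (as a natural number). -/
noncomputable def chromNum {V : Type*} (G : SimpleGraph V) : ℕ :=
  sInf {n | G.Colorable n}

open Finset

theorem Finset.eq_singleton_of_sum_le {ι : Type*} {s : Finset ι} {f : ι → ℕ} {i : ι}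
    (hi : i ∈ s) (hpos : ∀ j ∈ s, 1 ≤ f j) (hsum : ∑ j ∈ s, f j ≤ f i) : s = {i} := by
  classical
  have hrest : ∑ j ∈ s.erase i, f j = 0 := by
    have := add_sum_erase s f hi
    omega
  refine eq_singleton_iff_unique_mem.mpr ⟨hi, fun j hj => ?_⟩
  by_contra hji
  have := (sum_eq_zero_iff.mp hrest) j (mem_erase.mpr ⟨hji, hj⟩)
  have := hpos j hj
  omega

section

variable {V : Type*} {G : SimpleGraph V}

theorem colorable_of_forall_le {c : V → ℕ} (hc : ∀ ⦃u v⦄, G.Adj u v → c u ≠ c v) {m : ℕ}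
    (hm : ∀ u, c u ≤ m) : G.Colorable (m + 1) :=
  ⟨.mk (fun u => ⟨c u, Nat.lt_succ_of_le (hm u)⟩) fun huv h => hc huv (congrArg Fin.val h)⟩

theorem chromNum_le_of_colorable {n : ℕ} (h : G.Colorable n) : chromNum G ≤ n :=
  Nat.sInf_le h

theorem colorable_chromNum [Fintype V] : G.Colorable (chromNum G) :=
  Nat.sInf_mem (s := {n | G.Colorable n}) ⟨Fintype.card V, G.colorable_of_fintype⟩

namespace IsUCDomSet

variable {c : V → ℕ} {D : Finset V}

theorem nonempty [Nonempty V] (hD : IsUCDomSet G c D) : D.Nonempty := by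
  obtain ⟨v⟩ := ‹Nonempty V›
  by_cases hv : v ∈ D
  · exact ⟨v, hv⟩
  · obtain ⟨d, hd, -⟩ := hD.1 v hv
    exact ⟨d, hd⟩

theorem le_sup (hD : IsUCDomSet G c D) (u : V) : c u ≤ D.sup c := by
  by_cases hu : u ∈ D
  · exact Finset.le_sup hu
  · obtain ⟨d, hd, -, hlt⟩ := hD.1 u hu
    exact hlt.le.trans (Finset.le_sup hd)

theorem exists_adj_all [Nonempty V] (hc : ∀ ⦃u v⦄, G.Adj u v → c u ≠ c v)
    (hD : IsUCDomSet G c D) (hw : ∑ v ∈ D, c v ≤ chromNum G - 1) :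
    ∃ v : V, ∀ u : V, u = v ∨ G.Adj v u := by
  obtain ⟨d, hd, hsup⟩ := exists_mem_eq_sup D hD.nonempty c
  have hchrom : chromNum G ≤ c d + 1 :=
    chromNum_le_of_colorable (colorable_of_forall_le hc fun u => hsup ▸ hD.le_sup u)
  have hsingle : D = {d} := eq_singleton_of_sum_le hd hD.2 (by omega)
  refine ⟨d, fun u => or_iff_not_imp_left.mpr fun hud => ?_⟩
  obtain ⟨d', hd', hadj, -⟩ := hD.1 u (by simpa [hsingle] using hud)
  rw [hsingle, mem_singleton] at hd'
  exact hd' ▸ hadj.symm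

theorem singleton_of_adj_all {v : V} (hv : ∀ u, u = v ∨ G.Adj v u)
    (hlt : ∀ u, u ≠ v → c u < c v) (hpos : 1 ≤ c v) : IsUCDomSet G c {v} := by
  refine ⟨fun u hu => ?_, by simpa using hpos⟩
  have hu : u ≠ v := by simpa using hu
  exact ⟨v, mem_singleton_self v, ((hv u).resolve_left hu).symm, hlt u hu⟩

end IsUCDomSet

theorem exists_coloring_top_at_of_adj_all [Fintype V] {v : V} (hv : ∀ u, u = v ∨ G.Adj v u) :
    ∃ c : V → ℕ, (∀ ⦃u w⦄, G.Adj u w → c u ≠ c w) ∧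
      c v = chromNum G - 1 ∧ ∀ u, u ≠ v → c u < c v := by
  obtain ⟨C⟩ := colorable_chromNum (G := G)
  have hn : 0 < chromNum G := Fin.pos (C v)
  let top : Fin (chromNum G) := ⟨chromNum G - 1, by omega⟩
  let σ := Equiv.swap (C v) top
  have hσv : σ (C v) = top := Equiv.swap_apply_left _ _
  refine ⟨fun u => σ (C u), fun u w huw h => C.valid huw (σ.injective (Fin.ext h)),
    by simp [hσv, top], fun u hu => ?_⟩
  have hCu : C u ≠ C v := C.valid ((hv u).resolve_left hu).symm
  have hσu : (σ (C u) : ℕ) ≠ top := fun h =>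
    hCu (σ.injective (Fin.ext (h.trans (congrArg _ hσv.symm))))
  have := (σ (C u)).isLt
  simp only [hσv, top] at hσu ⊢
  omega

end

theorem stmt_19_general {V : Type*} [Fintype V] (G : SimpleGraph V)
    (hcard : 5 ≤ Fintype.card V) :
    (∃ c : V → ℕ, (∀ ⦃u v⦄, G.Adj u v → c u ≠ c v) ∧
        ∃ D : Finset V, IsUCDomSet G c D ∧ ∑ v ∈ D, c v ≤ chromNum G - 1) ↔
      ∃ v : V, ∀ u : V, u = v ∨ G.Adj v u := by
  have : Nonempty V := Fintype.card_pos_iff.mp (by omega)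
  constructor
  · rintro ⟨c, hc, D, hD, hw⟩
    exact hD.exists_adj_all hc hw
  · rintro ⟨v, hv⟩
    obtain ⟨c, hc, hcv, hlt⟩ := exists_coloring_top_at_of_adj_all hv
    obtain ⟨w, hw⟩ := Fintype.exists_ne_of_one_lt_card (by omega) v
    have hpos : 1 ≤ c v := by have := hlt w hw; omega
    exact ⟨c, hc, {v}, .singleton_of_adj_all hv hlt hpos, by simp [hcv]⟩

theorem stmt_19 {V : Type*} [Fintype V] (G : SimpleGraph V)
    (hconn : G.Connected) (hcard : 5 ≤ Fintype.card V) :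
    (∃ c : V → ℕ, (∀ ⦃u v⦄, G.Adj u v → c u ≠ c v) ∧
        ∃ D : Finset V, IsUCDomSet G c D ∧ ∑ v ∈ D, c v ≤ chromNum G - 1) ↔
      ∃ v : V, ∀ u : V, u = v ∨ G.Adj v u :=
  stmt_19_general G hcard
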